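/- A is T-EP if and only if A T* is EP and A = A T* T. -/

import Mathlib

open Matrix

/-- The four Penrose conditions: `X` is the Moore-Penrose inverse of `A`. -/
def IsMP {m n : ℕ} (A : Matrix (Fin m) (Fin n) ℂ) (X : Matrix (Fin n) (Fin m) ℂ) : Prop :=
  A * X * A = A ∧ X * A * X = X ∧ (A * X)ᴴ = A * X ∧ (X * A)ᴴ = X * A

/-- `A` is T-EP: range(A) = range(T Aᴴ T) and A = A Tᴴ T. -/
def IsTEP {m n : ℕ} (T A : Matrix (Fin m) (Fin n) ℂ) : Prop :=
  LinearMap.range (Matrix.mulVecLin A) = LinearMap.range (Matrix.mulVecLin (T * Aᴴ * T)) ∧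
    A = A * Tᴴ * T

/-! With `B = A Tᴴ`, the condition `A = A Tᴴ T` gives `range A = range B`, and `Bᴴ = T Aᴴ`.
If `range A = range (T Aᴴ T) ⊆ range Bᴴ`, equality of ranks forces `range B = range Bᴴ`.
Conversely, if `range B = range Bᴴ` then `range A ⊆ range T`, so `T Tᴴ A = A` since `T` is a
partial isometry; hence `T Aᴴ = T Aᴴ T Tᴴ` and `range (T Aᴴ) = range (T Aᴴ T)`.

`range B = range Bᴴ` is the EP property: `B B†` and `B† B` are the orthogonal projections onto
`range B` and `range Bᴴ`, and orthogonal projections with equal ranges coincide. A Moore–Penrose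
inverse is assembled from solutions of the normal equations `Mᴴ M X = Mᴴ`, which exist because
`rank (Mᴴ M) = rank M`. -/

namespace Matrix

section CommSemiring

variable {R l m n : Type*} [CommSemiring R] [Fintype m] [Fintype n]

theorem range_mulVecLin_le_iff_exists_eq_mul {M : Matrix l n R} {N : Matrix l m R} :
    LinearMap.range M.mulVecLin ≤ LinearMap.range N.mulVecLin ↔
      ∃ C : Matrix m n R, M = N * C := by
  constructor
  · intro h
    choose C hC using fun j =>
      h (M.range_mulVecLin ▸ Submodule.subset_span (Set.mem_range_self j) :
        M.col j ∈ LinearMap.range M.mulVecLin)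
    refine ⟨(of C)ᵀ, ?_⟩
    ext i j
    simpa [mulVec, dotProduct, mul_apply] using (congrFun (hC j) i).symm
  · rintro ⟨C, rfl⟩
    rw [mulVecLin_mul]
    exact LinearMap.range_comp_le_range _ _

theorem range_mulVecLin_mul_le (M : Matrix l m R) (N : Matrix m n R) :
    LinearMap.range (M * N).mulVecLin ≤ LinearMap.range M.mulVecLin :=
  range_mulVecLin_le_iff_exists_eq_mul.2 ⟨N, rfl⟩

theorem range_mulVecLin_mul_eq_of_eq_mul_mul {M : Matrix l m R} {N : Matrix m n R}
    {K : Matrix n m R} (h : M = M * N * K) :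
    LinearMap.range (M * N).mulVecLin = LinearMap.range M.mulVecLin :=
  le_antisymm (range_mulVecLin_mul_le M N) (range_mulVecLin_le_iff_exists_eq_mul.2 ⟨K, h⟩)

theorem _root_.IsStarProjection.eq_of_range_mulVecLin_eq [StarRing R] {P Q : Matrix n n R}
    (hP : IsStarProjection P) (hQ : IsStarProjection Q)
    (h : LinearMap.range P.mulVecLin = LinearMap.range Q.mulVecLin) : P = Q := by
  obtain ⟨C, hC⟩ := range_mulVecLin_le_iff_exists_eq_mul.1 h.ge
  obtain ⟨D, hD⟩ := range_mulVecLin_le_iff_exists_eq_mul.1 h.le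
  have hPQ : P * Q = Q := by rw [hC, ← Matrix.mul_assoc, hP.isIdempotentElem.eq]
  have hQP : Q * P = P := by rw [hD, ← Matrix.mul_assoc, hQ.isIdempotentElem.eq]
  calc P = star (Q * P) := by rw [hQP, hP.isSelfAdjoint.star_eq]
    _ = P * Q := by rw [star_mul, hP.isSelfAdjoint.star_eq, hQ.isSelfAdjoint.star_eq]
    _ = Q := hPQ

end CommSemiring

section RCLike

open scoped ComplexOrder

variable {𝕜 m n : Type*} [RCLike 𝕜] [Fintype m] [Fintype n]

theorem range_mulVecLin_eq_range_conjTranspose_of_le {M : Matrix n n 𝕜}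
    (h : LinearMap.range M.mulVecLin ≤ LinearMap.range Mᴴ.mulVecLin) :
    LinearMap.range M.mulVecLin = LinearMap.range Mᴴ.mulVecLin :=
  Submodule.eq_of_le_of_finrank_le h (rank_conjTranspose M).le

theorem exists_conjTranspose_mul_self_mul_eq (M : Matrix m n 𝕜) :
    ∃ X : Matrix n m 𝕜, Mᴴ * M * X = Mᴴ := by
  have hle := range_mulVecLin_mul_le Mᴴ M
  have hrank : Mᴴ.rank ≤ (Mᴴ * M).rank := by
    rw [rank_conjTranspose_mul_self, rank_conjTranspose]
  obtain ⟨X, hX⟩ :=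
    range_mulVecLin_le_iff_exists_eq_mul.1 (Submodule.eq_of_le_of_finrank_le hle hrank).ge
  exact ⟨X, hX.symm⟩

variable {M : Matrix m n 𝕜} {X : Matrix n m 𝕜}

theorem isHermitian_mul_of_conjTranspose_mul_self_mul_eq (hX : Mᴴ * M * X = Mᴴ) :
    (M * X).IsHermitian := by
  have h : (M * X)ᴴ * (M * X) = (M * X)ᴴ := by
    rw [conjTranspose_mul, Matrix.mul_assoc, ← Matrix.mul_assoc Mᴴ, hX]
  have := (h ▸ isHermitian_conjTranspose_mul_self (M * X)).conjTranspose
  rwa [conjTranspose_conjTranspose] at this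

theorem mul_mul_eq_self_of_conjTranspose_mul_self_mul_eq (hX : Mᴴ * M * X = Mᴴ) :
    M * X * M = M := by
  have h : (M * X * M)ᴴ = Mᴴ := by
    rw [conjTranspose_mul, isHermitian_mul_of_conjTranspose_mul_self_mul_eq hX,
      ← Matrix.mul_assoc, hX]
  simpa using congrArg Matrix.conjTranspose h

end RCLike

end Matrix

namespace IsMP

variable {a b : ℕ} {M : Matrix (Fin a) (Fin b) ℂ} {Md : Matrix (Fin b) (Fin a) ℂ}

theorem conjTranspose (h : IsMP M Md) : IsMP Mᴴ Mdᴴ := by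
  obtain ⟨h1, h2, h3, h4⟩ := h
  refine ⟨?_, ?_, ?_, ?_⟩
  · simpa [Matrix.mul_assoc] using congrArg Matrix.conjTranspose h1
  · simpa [Matrix.mul_assoc] using congrArg Matrix.conjTranspose h2
  · rw [← conjTranspose_mul, h4]; exact h4
  · rw [← conjTranspose_mul, h3]; exact h3

theorem isStarProjection_mul (h : IsMP M Md) : IsStarProjection (M * Md) :=
  ⟨by rw [IsIdempotentElem, ← Matrix.mul_assoc, h.1], h.2.2.1⟩

theorem range_mulVecLin_mul (h : IsMP M Md) :
    LinearMap.range (M * Md).mulVecLin = LinearMap.range M.mulVecLin :=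
  range_mulVecLin_mul_eq_of_eq_mul_mul h.1.symm

theorem conjTranspose_mul_conjTranspose (h : IsMP M Md) : Mᴴ * Mdᴴ = Md * M := by
  rw [← conjTranspose_mul, h.2.2.2]

end IsMP

theorem exists_isMP {a b : ℕ} (M : Matrix (Fin a) (Fin b) ℂ) : ∃ Md, IsMP M Md := by
  obtain ⟨X, hX⟩ := exists_conjTranspose_mul_self_mul_eq M
  obtain ⟨W, hW⟩ := exists_conjTranspose_mul_self_mul_eq Mᴴ
  -- `Q = Mᴴ W` and `M X` are the orthogonal projections onto the ranges of `Mᴴ` and `M`.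
  have hP := isHermitian_mul_of_conjTranspose_mul_self_mul_eq hX
  have hMXM := mul_mul_eq_self_of_conjTranspose_mul_self_mul_eq hX
  have hQ := isHermitian_mul_of_conjTranspose_mul_self_mul_eq hW
  have hMQ : M * (Mᴴ * W) = M := by simpa [Matrix.mul_assoc] using hW
  have hWM : Wᴴ * M = Mᴴ * W := by simpa using hQ.eq
  generalize Mᴴ * W = Q at hQ hMQ hWM
  have hQXM : Q * X * M = Q := by rw [← hWM, Matrix.mul_assoc Wᴴ, Matrix.mul_assoc, hMXM]
  refine ⟨Q * X, ?_, ?_, ?_, ?_⟩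
  · rw [← Matrix.mul_assoc, hMQ, hMXM]
  · calc Q * X * M * (Q * X) = Q * X * (M * Q) * X := by simp only [Matrix.mul_assoc]
      _ = Q * X := by rw [hMQ, hQXM]
  · rw [← Matrix.mul_assoc, hMQ, hP.eq]
  · rw [hQXM, hQ.eq]

theorem range_mulVecLin_eq_range_conjTranspose_iff {a : ℕ} (B : Matrix (Fin a) (Fin a) ℂ) :
    LinearMap.range B.mulVecLin = LinearMap.range Bᴴ.mulVecLin ↔
      ∃ Bd, IsMP B Bd ∧ B * Bd = Bd * B := by
  constructor
  · intro hEP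
    obtain ⟨Bd, h⟩ := exists_isMP B
    refine ⟨Bd, h, h.isStarProjection_mul.eq_of_range_mulVecLin_eq ?_ ?_⟩
    · rw [← h.conjTranspose_mul_conjTranspose]
      exact h.conjTranspose.isStarProjection_mul
    · rw [h.range_mulVecLin_mul, hEP, ← h.conjTranspose_mul_conjTranspose,
        h.conjTranspose.range_mulVecLin_mul]
  · rintro ⟨Bd, h, hc⟩
    rw [← h.range_mulVecLin_mul, hc, ← h.conjTranspose_mul_conjTranspose,
      h.conjTranspose.range_mulVecLin_mul]

namespace Matrix

variable {𝕜 m n : Type*} [RCLike 𝕜] [Fintype m] [Fintype n] {A T : Matrix m n 𝕜}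

theorem range_mulVecLin_eq_range_mul_conjTranspose_mul_iff (hT : T = T * Tᴴ * T)
    (hA : A = A * Tᴴ * T) :
    LinearMap.range A.mulVecLin = LinearMap.range (T * Aᴴ * T).mulVecLin ↔
      LinearMap.range (A * Tᴴ).mulVecLin = LinearMap.range (A * Tᴴ)ᴴ.mulVecLin := by
  have hB : LinearMap.range (A * Tᴴ).mulVecLin = LinearMap.range A.mulVecLin :=
    range_mulVecLin_mul_eq_of_eq_mul_mul hA
  have hBH : (A * Tᴴ)ᴴ = T * Aᴴ := by rw [conjTranspose_mul, conjTranspose_conjTranspose]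
  constructor
  · intro h
    refine range_mulVecLin_eq_range_conjTranspose_of_le ?_
    rw [hB, h, hBH]
    exact range_mulVecLin_mul_le _ _
  · intro h
    rw [hB, hBH] at h
    obtain ⟨C, hC⟩ :=
      range_mulVecLin_le_iff_exists_eq_mul.1 (h.trans_le (range_mulVecLin_mul_le T Aᴴ))
    have hTTA : T * Tᴴ * A = A := by rw [hC, ← Matrix.mul_assoc, ← hT]
    have hTAT : T * Aᴴ = T * Aᴴ * T * Tᴴ := by
      simpa [Matrix.mul_assoc] using congrArg (T * ·) (congrArg conjTranspose hTTA).symm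
    rw [h, range_mulVecLin_mul_eq_of_eq_mul_mul hTAT]

end Matrix

theorem stmt13 {m n : ℕ} (A T : Matrix (Fin m) (Fin n) ℂ)
    (hT : T = T * Tᴴ * T) :
    IsTEP T A ↔
      ((∃ Bd : Matrix (Fin m) (Fin m) ℂ,
          IsMP (A * Tᴴ) Bd ∧ A * Tᴴ * Bd = Bd * (A * Tᴴ)) ∧ A = A * Tᴴ * T) := by
  rw [IsTEP, ← range_mulVecLin_eq_range_conjTranspose_iff]
  exact and_congr_left (range_mulVecLin_eq_range_mul_conjTranspose_mul_iff hT)
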